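/- The multivariate Beta function equals the Dirichlet integral: for positive reals α₁,…,α_M, the integral over the (M−1)-dimensional simplex {x ∈ ℝ^M : xᵢ ≥ 0, ∑xᵢ = 1} of ∏ᵢ xᵢ^{αᵢ−1} equals (∏ᵢ Γ(αᵢ))/Γ(∑ᵢ αᵢ). -/

import Mathlib

/-!
Peeling off the first coordinate `t` of the simplex of size `1` leaves a simplex of size `1 - t`
in one dimension fewer, and scaling that simplex to size `1` multiplies the integral over it by
`(1 - t) ^ (α₂ + ⋯ + α_M - 1)`. Hence the Dirichlet integral for `(α₁, …, α_M)` is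
`B(α₁, α₂ + ⋯ + α_M)` times the one for `(α₂, …, α_M)`, and induction on `M` with
`B(a, b) = Γ(a) Γ(b) / Γ(a + b)` gives the formula. The integrals are taken in `ℝ≥0∞`, so that
Tonelli's theorem applies without any integrability bookkeeping.
-/

open Real Finset MeasureTheory

open scoped ENNReal

theorem MeasureTheory.Measure.lintegral_comp_smul {E : Type*} [NormedAddCommGroup E]
    [NormedSpace ℝ E] [MeasurableSpace E] [BorelSpace E] [FiniteDimensional ℝ E]
    (μ : Measure E) [μ.IsAddHaarMeasure] (f : E → ℝ≥0∞) {R : ℝ} (hR : R ≠ 0) :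
    ∫⁻ x, f (R • x) ∂μ = ENNReal.ofReal |(R ^ Module.finrank ℝ E)⁻¹| * ∫⁻ x, f x ∂μ := by
  rw [← (measurableEmbedding_const_smul₀ hR).lintegral_map, map_addHaar_smul μ hR,
    lintegral_smul_measure, smul_eq_mul]

theorem MeasureTheory.lintegral_fin_cons {α : Type*} [MeasureSpace α]
    [SigmaFinite (volume : Measure α)] {n : ℕ} {f : (Fin (n + 1) → α) → ℝ≥0∞}
    (hf : Measurable f) :
    ∫⁻ x, f x = ∫⁻ t, ∫⁻ y, f (Fin.cons t y) := by
  rw [← ((volume_preserving_piFinSuccAbove (fun _ => α) 0).symm).lintegral_comp hf,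
    Measure.volume_eq_prod, lintegral_prod]
  · simp [MeasurableEquiv.piFinSuccAbove_symm_apply, Fin.insertNthEquiv, Fin.insertNth_zero']
  · exact (hf.comp (MeasurableEquiv.measurable _)).aemeasurable

theorem ProbabilityTheory.setLIntegral_Ioo_rpow_mul_one_sub_rpow {a b : ℝ} (ha : 0 < a)
    (hb : 0 < b) :
    ∫⁻ t in Set.Ioo 0 1, ENNReal.ofReal (t ^ (a - 1) * (1 - t) ^ (b - 1)) =
      ENNReal.ofReal (beta a b) := by
  have hB := beta_pos ha hb
  have h := lintegral_betaPDF_eq_one ha hb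
  simp_rw [lintegral_betaPDF, mul_assoc, ENNReal.ofReal_mul (one_div_pos.2 hB).le] at h
  rw [lintegral_const_mul' _ _ ENNReal.ofReal_ne_top] at h
  calc _ = ENNReal.ofReal (beta a b) * (ENNReal.ofReal (1 / beta a b) *
        ∫⁻ t in Set.Ioo 0 1, ENNReal.ofReal (t ^ (a - 1) * (1 - t) ^ (b - 1))) := by
        rw [← mul_assoc, ← ENNReal.ofReal_mul hB.le, mul_one_div_cancel hB.ne',
          ENNReal.ofReal_one, one_mul]
    _ = _ := by rw [h, mul_one]

noncomputable def multiBeta {ι : Type*} [Fintype ι] (α : ι → ℝ) : ℝ :=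
  (∏ i, Gamma (α i)) / Gamma (∑ i, α i)

theorem multiBeta_nonneg {ι : Type*} [Fintype ι] {α : ι → ℝ} (hα : ∀ i, 0 < α i) :
    0 ≤ multiBeta α :=
  div_nonneg (prod_nonneg fun i _ => (Gamma_pos_of_pos (hα i)).le)
    (Gamma_nonneg_of_nonneg (sum_nonneg fun i _ => (hα i).le))

theorem multiBeta_eq_beta_mul_multiBeta_tail {n : ℕ} (α : Fin (n + 1) → ℝ)
    (h : Gamma (∑ i, Fin.tail α i) ≠ 0) :
    multiBeta α = ProbabilityTheory.beta (α 0) (∑ i, Fin.tail α i) * multiBeta (Fin.tail α) := by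
  rw [multiBeta, multiBeta, ProbabilityTheory.beta, Fin.prod_univ_succ, Fin.sum_univ_succ]
  field_simp
  rfl

namespace DirichletIntegral

/-- The simplex `{x ∈ ℝⁿ⁺¹ | 0 ≤ xᵢ, ∑ xᵢ = s}`, seen through its first `n` coordinates. -/
def simplex (n : ℕ) (s : ℝ) : Set (Fin n → ℝ) :=
  {x | (∀ i, 0 ≤ x i) ∧ ∑ i, x i ≤ s}

noncomputable def integrand {n : ℕ} (α : Fin (n + 1) → ℝ) (s : ℝ) (x : Fin n → ℝ) : ℝ :=
  (∏ i : Fin n, x i ^ (α i.castSucc - 1)) * (s - ∑ i, x i) ^ (α (Fin.last n) - 1)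

noncomputable def lintegralSimplex {n : ℕ} (α : Fin (n + 1) → ℝ) (s : ℝ) : ℝ≥0∞ :=
  ∫⁻ x, (simplex n s).indicator (fun x => ENNReal.ofReal (integrand α s x)) x

variable {n : ℕ}

theorem measurableSet_simplex (n : ℕ) (s : ℝ) : MeasurableSet (simplex n s) :=
  measurableSet_setOfPred.2 (by fun_prop)

theorem measurable_integrand (α : Fin (n + 1) → ℝ) (s : ℝ) : Measurable (integrand α s) := by
  unfold integrand
  fun_prop

theorem integrand_nonneg (α : Fin (n + 1) → ℝ) {s : ℝ} {x : Fin n → ℝ} (hx : x ∈ simplex n s) :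
    0 ≤ integrand α s x :=
  mul_nonneg (prod_nonneg fun i _ => rpow_nonneg (hx.1 i) _) (rpow_nonneg (sub_nonneg.2 hx.2) _)

theorem simplex_eq_empty {s : ℝ} (hs : s < 0) : simplex n s = ∅ :=
  Set.eq_empty_of_forall_notMem fun _ hx =>
    (hs.trans_le (sum_nonneg fun i _ => hx.1 i)).not_ge hx.2

theorem setIntegral_integrand_eq_toReal (α : Fin (n + 1) → ℝ) (s : ℝ) :
    ∫ x in simplex n s, integrand α s x = (lintegralSimplex α s).toReal := by
  rw [integral_eq_lintegral_of_nonneg_ae, lintegralSimplex,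
    lintegral_indicator (measurableSet_simplex n s)]
  · exact (ae_restrict_iff' (measurableSet_simplex n s)).2 (ae_of_all _ fun _ => integrand_nonneg α)
  · exact (measurable_integrand α s).aestronglyMeasurable

theorem smul_mem_simplex_iff {s : ℝ} (hs : 0 < s) {x : Fin n → ℝ} :
    s • x ∈ simplex n s ↔ x ∈ simplex n 1 := by
  simp only [simplex, Set.mem_ofPred_eq, Pi.smul_apply, smul_eq_mul, ← mul_sum,
    mul_nonneg_iff_of_pos_left hs, mul_le_iff_le_one_right hs]

theorem integrand_smul (α : Fin (n + 1) → ℝ) {s : ℝ} (hs : 0 < s) {x : Fin n → ℝ}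
    (hx : x ∈ simplex n 1) :
    integrand α s (s • x) = s ^ (∑ i, α i - (n + 1)) * integrand α 1 x := by
  have hexp : ∑ i, α i - (n + 1) = ∑ i : Fin n, (α i.castSucc - 1) + (α (Fin.last n) - 1) := by
    simp only [Fin.sum_univ_castSucc, sum_sub_distrib, sum_const, card_univ, Fintype.card_fin,
      nsmul_eq_mul, mul_one]
    ring
  simp only [integrand, Pi.smul_apply, smul_eq_mul, ← mul_sum,
    show s - s * ∑ i, x i = s * (1 - ∑ i, x i) by ring,
    mul_rpow hs.le (hx.1 _), mul_rpow hs.le (sub_nonneg.2 hx.2), prod_mul_distrib,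
    hexp, rpow_add hs, rpow_sum_of_pos hs]
  ring

theorem lintegralSimplex_eq_rpow_mul (α : Fin (n + 1) → ℝ) {s : ℝ} (hs : 0 < s) :
    lintegralSimplex α s = ENNReal.ofReal (s ^ (∑ i, α i - 1)) * lintegralSimplex α 1 := by
  have hscaled : ∀ x, (simplex n s).indicator (fun x => ENNReal.ofReal (integrand α s x)) (s • x) =
      ENNReal.ofReal (s ^ (∑ i, α i - (n + 1))) *
        (simplex n 1).indicator (fun x => ENNReal.ofReal (integrand α 1 x)) x := by
    intro x
    by_cases hx : x ∈ simplex n 1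
    · rw [Set.indicator_of_mem ((smul_mem_simplex_iff hs).2 hx), Set.indicator_of_mem hx,
        integrand_smul α hs hx, ENNReal.ofReal_mul (rpow_nonneg hs.le _)]
    · rw [Set.indicator_of_notMem (mt (smul_mem_simplex_iff hs).1 hx),
        Set.indicator_of_notMem hx, mul_zero]
  have h := Measure.lintegral_comp_smul volume
    ((simplex n s).indicator (fun x => ENNReal.ofReal (integrand α s x))) hs.ne'
  simp only [hscaled, lintegral_const_mul' _ _ ENNReal.ofReal_ne_top, Module.finrank_fin_fun] at h
  have hsn : 0 < s ^ n := pow_pos hs n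
  calc lintegralSimplex α s
      = ENNReal.ofReal (s ^ n) * (ENNReal.ofReal |(s ^ n)⁻¹| * lintegralSimplex α s) := by
        rw [← mul_assoc, ← ENNReal.ofReal_mul hsn.le, abs_of_pos (inv_pos.2 hsn),
          mul_inv_cancel₀ hsn.ne', ENNReal.ofReal_one, one_mul]
    _ = ENNReal.ofReal (s ^ (∑ i, α i - 1)) * lintegralSimplex α 1 := by
        rw [lintegralSimplex, ← h, ← mul_assoc, ← ENNReal.ofReal_mul hsn.le, ← rpow_natCast,
          ← rpow_add hs, lintegralSimplex]
        congr 3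
        ring

theorem lintegralSimplex_of_neg (α : Fin (n + 1) → ℝ) {s : ℝ} (hs : s < 0) :
    lintegralSimplex α s = 0 := by
  simp [lintegralSimplex, simplex_eq_empty hs]

theorem cons_mem_simplex_iff {s t : ℝ} {y : Fin n → ℝ} :
    (Fin.cons t y : Fin (n + 1) → ℝ) ∈ simplex (n + 1) s ↔ 0 ≤ t ∧ y ∈ simplex n (s - t) := by
  simp only [simplex, Set.mem_ofPred_eq, Fin.forall_fin_succ, Fin.cons_zero, Fin.cons_succ,
    Fin.sum_cons, le_sub_iff_add_le', and_assoc]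

theorem integrand_cons (α : Fin (n + 2) → ℝ) (s t : ℝ) (y : Fin n → ℝ) :
    integrand α s (Fin.cons t y) = t ^ (α 0 - 1) * integrand (Fin.tail α) (s - t) y := by
  simp only [integrand, Fin.prod_univ_succ, Fin.cons_zero, Fin.cons_succ, Fin.sum_cons,
    Fin.tail, Fin.castSucc_zero, ← Fin.succ_castSucc, ← Fin.succ_last, sub_sub]
  ring

theorem indicator_simplex_cons (α : Fin (n + 2) → ℝ) (s t : ℝ) (y : Fin n → ℝ) :
    (simplex (n + 1) s).indicator (fun x => ENNReal.ofReal (integrand α s x)) (Fin.cons t y) =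
      (Set.Ici 0).indicator (fun t => ENNReal.ofReal (t ^ (α 0 - 1))) t *
        (simplex n (s - t)).indicator
          (fun y => ENNReal.ofReal (integrand (Fin.tail α) (s - t) y)) y := by
  by_cases ht : 0 ≤ t
  · by_cases hy : y ∈ simplex n (s - t)
    · rw [Set.indicator_of_mem (cons_mem_simplex_iff.2 ⟨ht, hy⟩),
        Set.indicator_of_mem (Set.mem_Ici.2 ht), Set.indicator_of_mem hy, integrand_cons,
        ENNReal.ofReal_mul (rpow_nonneg ht _)]
    · rw [Set.indicator_of_notMem (fun h => hy (cons_mem_simplex_iff.1 h).2),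
        Set.indicator_of_notMem hy, mul_zero]
  · rw [Set.indicator_of_notMem (fun h => ht (cons_mem_simplex_iff.1 h).1),
      Set.indicator_of_notMem (by simpa using ht), zero_mul]

theorem lintegralSimplex_succ (α : Fin (n + 2) → ℝ) (s : ℝ) :
    lintegralSimplex α s =
      ∫⁻ t in Set.Ici 0,
        ENNReal.ofReal (t ^ (α 0 - 1)) * lintegralSimplex (Fin.tail α) (s - t) := by
  rw [lintegralSimplex, lintegral_fin_cons
    ((measurable_integrand α s).ennreal_ofReal.indicator (measurableSet_simplex _ s)),
    ← lintegral_indicator measurableSet_Ici]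
  refine lintegral_congr fun t => ?_
  simp only [indicator_simplex_cons]
  rw [lintegral_const_mul _
      ((measurable_integrand _ _).ennreal_ofReal.indicator (measurableSet_simplex _ _)),
    Set.indicator_mul_left (g := fun t => lintegralSimplex (Fin.tail α) (s - t)), lintegralSimplex]

theorem lintegralSimplex_one_succ (α : Fin (n + 2) → ℝ) (hα : ∀ i, 0 < α i) :
    lintegralSimplex α 1 = ENNReal.ofReal (ProbabilityTheory.beta (α 0) (∑ i, Fin.tail α i)) *
      lintegralSimplex (Fin.tail α) 1 := by
  set B := ∑ i, Fin.tail α i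
  have hB : 0 < B := sum_pos (fun i _ => hα i.succ) univ_nonempty
  set g := fun t : ℝ => ENNReal.ofReal (t ^ (α 0 - 1)) * lintegralSimplex (Fin.tail α) (1 - t)
  have hg : ∀ t ∈ Set.Ioo (0 : ℝ) 1,
      g t = ENNReal.ofReal (t ^ (α 0 - 1) * (1 - t) ^ (B - 1)) *
        lintegralSimplex (Fin.tail α) 1 := by
    intro t ht
    simp only [g]
    rw [lintegralSimplex_eq_rpow_mul _ (sub_pos.2 ht.2), ← mul_assoc,
      ← ENNReal.ofReal_mul (rpow_nonneg ht.1.le _)]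
  have hvanish : ∫⁻ t in Set.Ici 1, g t = 0 := by
    rw [setLIntegral_congr Ioi_ae_eq_Ici.symm]
    exact setLIntegral_eq_zero measurableSet_Ioi fun t ht => by
      simp [g, lintegralSimplex_of_neg _ (sub_neg.2 ht)]
  calc lintegralSimplex α 1 = ∫⁻ t in Set.Ici 0, g t := lintegralSimplex_succ α 1
    _ = ∫⁻ t in Set.Ioo 0 1 ∪ Set.Ici 1, g t := by
        rw [Set.Ioo_union_Ici_eq_Ioi one_pos, setLIntegral_congr Ioi_ae_eq_Ici]
    _ = ∫⁻ t in Set.Ioo 0 1, g t := by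
        rw [lintegral_union measurableSet_Ici
          ((Set.Iio_disjoint_Ici le_rfl).mono_left Set.Ioo_subset_Iio_self), hvanish, add_zero]
    _ = _ := by
        rw [setLIntegral_congr_fun measurableSet_Ioo hg, lintegral_mul_const _ (by fun_prop),
          ProbabilityTheory.setLIntegral_Ioo_rpow_mul_one_sub_rpow (hα 0) hB]

theorem lintegralSimplex_one_eq_multiBeta (α : Fin (n + 1) → ℝ) (hα : ∀ i, 0 < α i) :
    lintegralSimplex α 1 = ENNReal.ofReal (multiBeta α) := by
  induction n with
  | zero =>
    simp [lintegralSimplex, integrand, simplex, multiBeta, volume_pi, (Gamma_pos_of_pos (hα 0)).ne']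
  | succ n ih =>
    have hB : 0 < ∑ i, Fin.tail α i := sum_pos (fun i _ => hα i.succ) univ_nonempty
    rw [lintegralSimplex_one_succ α hα, ih (Fin.tail α) fun i => hα i.succ,
      multiBeta_eq_beta_mul_multiBeta_tail α (Gamma_pos_of_pos hB).ne',
      ENNReal.ofReal_mul (ProbabilityTheory.beta_pos (hα 0) hB).le]

end DirichletIntegral

/-- Dirichlet integral: for positive reals `α₁,…,α_M` (here `M = n + 1`), the integral of
`∏ᵢ xᵢ^(αᵢ-1)` over the simplex `{x ∈ ℝ^M : xᵢ ≥ 0, ∑ xᵢ = 1}`, parameterized by the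
first `n` coordinates (with `x_M = 1 - ∑_{i<M} xᵢ`), equals `(∏ᵢ Γ(αᵢ))/Γ(∑ᵢ αᵢ)`. -/
theorem dirichlet_integral (n : ℕ) (α : Fin (n + 1) → ℝ) (hα : ∀ i, 0 < α i) :
    ∫ x in {x : Fin n → ℝ | (∀ i, 0 ≤ x i) ∧ (∑ i, x i) ≤ 1},
        (∏ i : Fin n, x i ^ (α i.castSucc - 1)) * (1 - ∑ i, x i) ^ (α (Fin.last n) - 1) =
      (∏ i, Real.Gamma (α i)) / Real.Gamma (∑ i, α i) := by
  rw [← multiBeta, ← ENNReal.toReal_ofReal (multiBeta_nonneg hα),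
    ← DirichletIntegral.lintegralSimplex_one_eq_multiBeta α hα]
  exact DirichletIntegral.setIntegral_integrand_eq_toReal α 1
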